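/- Two maximal tubings J and K of the cycle graph C_n are equal if and only if their inversion sets are equal: inv(J) = inv(K). -/

import Mathlib

open Finset

section TubingDefs

variable {n : ℕ}

/-- A tube of a graph: a nonempty vertex subset inducing a connected subgraph. -/
def IsTube (G : SimpleGraph (Fin n)) (X : Finset (Fin n)) : Prop :=
  X.Nonempty ∧ (G.induce (X : Set (Fin n))).Connected

/-- Tubes are compatible if nested or with disconnected union. -/
def TubeCompatible (G : SimpleGraph (Fin n)) (X Y : Finset (Fin n)) : Prop :=
  X ⊆ Y ∨ Y ⊆ X ∨ ¬ IsTube G (X ∪ Y)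

def IsTubing (G : SimpleGraph (Fin n)) (T : Finset (Finset (Fin n))) : Prop :=
  (∀ X ∈ T, IsTube G X) ∧ ∀ X ∈ T, ∀ Y ∈ T, TubeCompatible G X Y

def IsMaxTubing (G : SimpleGraph (Fin n)) (T : Finset (Finset (Fin n))) : Prop :=
  IsTubing G T ∧ ∀ T', IsTubing G T' → T ⊆ T' → T' = T

/-- The smallest tube of `T` containing `x`: the intersection of all tubes of `T`
containing `x`. -/
def tubingDown (T : Finset (Finset (Fin n))) (x : Fin n) : Finset (Fin n) :=
  Finset.univ.filter (fun y => ∀ X ∈ T, x ∈ X → y ∈ X)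

/-- The G-tree order of a tubing: `x ≤_T y` iff `x` lies in the smallest tube containing `y`. -/
def treeLE (T : Finset (Finset (Fin n))) (x y : Fin n) : Prop :=
  x ∈ tubingDown T y

/-- `y` covers `x` in the G-tree order of `T`. -/
def TreeCovBy (T : Finset (Finset (Fin n))) (x y : Fin n) : Prop :=
  treeLE T x y ∧ x ≠ y ∧ ∀ z, treeLE T x z → treeLE T z y → z = x ∨ z = y

/-- Flip cover relation on maximal tubings: exchange exactly one tube, with the
top (least-nested) element of the exchanged tube increasing. -/
def FlipCover (G : SimpleGraph (Fin n)) (T J : Finset (Finset (Fin n))) : Prop :=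
  IsMaxTubing G T ∧ IsMaxTubing G J ∧
  ∃ X Y, X ∈ T ∧ Y ∈ J ∧ X ≠ Y ∧ T.erase X = J.erase Y ∧
    ∃ x y : Fin n, tubingDown T x = X ∧ tubingDown J y = Y ∧ x < y

/-- The order of the poset of maximal tubings, generated by flip covers. -/
def MTubLE (G : SimpleGraph (Fin n)) :
    Finset (Finset (Fin n)) → Finset (Finset (Fin n)) → Prop :=
  Relation.ReflTransGen (FlipCover G)

/-- Inversions: pairs `i < j` with `j <_T i` in the G-tree. -/
def invSet (T : Finset (Finset (Fin n))) : Set (Fin n × Fin n) :=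
  {p | p.1 < p.2 ∧ treeLE T p.2 p.1}

/-- Coinversions: pairs `i < j` with `i <_T j` in the G-tree. -/
def coinvSet (T : Finset (Finset (Fin n))) : Set (Fin n × Fin n) :=
  {p | p.1 < p.2 ∧ treeLE T p.1 p.2}

/-- Incomparable pairs `i < j` of the G-tree. -/
def incSet (T : Finset (Finset (Fin n))) : Set (Fin n × Fin n) :=
  {p | p.1 < p.2 ∧ ¬ treeLE T p.1 p.2 ∧ ¬ treeLE T p.2 p.1}

/-- The cut of the tube `J↓(x)`, where `m` is the root of the G-tree of `J`. -/
def cutTube (J : Finset (Finset (Fin n))) (m x : Fin n) : Finset (Fin n) :=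
  if x = m then tubingDown J x
  else if x < m then (tubingDown J x).filter (fun y => y < m)
  else (tubingDown J x).filter (fun y => m < y)

/-- The Cut map on maximal tubings of the cycle. -/
def CutTubing (J : Finset (Finset (Fin n))) (m : Fin n) : Finset (Finset (Fin n)) :=
  Finset.image (cutTube J m) Finset.univ

/-- Inversions of a word: pairs `i < j` such that `j` appears before `i`. -/
def listInvSet (w : List (Fin n)) : Set (Fin n × Fin n) :=
  {p | p.1 < p.2 ∧ p.1 ∈ w ∧ p.2 ∈ w ∧ w.idxOf p.2 < w.idxOf p.1}

end TubingDefs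

/-- The path graph `1 - 2 - ⋯ - n`. -/
def pathGraph (n : ℕ) : SimpleGraph (Fin n) :=
  SimpleGraph.fromRel (fun a b => (a : ℕ) + 1 = (b : ℕ))

/-- The cycle graph `1 - 2 - ⋯ - n - 1`. -/
def cycleGraph (n : ℕ) : SimpleGraph (Fin n) :=
  SimpleGraph.fromRel (fun a b => (a : ℕ) + 1 = (b : ℕ) ∨ ((a : ℕ) = 0 ∧ (b : ℕ) = n - 1))

/-!
Write `J↓b` for the smallest tube of `J` containing `b`. Since `J↓b` is connected, `J↓b ⊆ K↓b`
follows once `K↓b` absorbs every vertex `x ∈ J↓b` adjacent to some `c ∈ K↓b`. If `x > b`, then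
`(b, x)` is an inversion of `J`, hence of `K`, so `x ∈ K↓b`. If `x < b` and `x ∉ K↓b`, the tubes
`K↓x` and `K↓b` are not nested: `K↓b ⊆ K↓x` would make `(x, b)` an inversion of `K`, hence of `J`,
against the antisymmetry of the `J`-tree. But `x ∈ K↓x` is adjacent to `c ∈ K↓b`, so their union
is a tube, contradicting compatibility. By symmetry `J↓ = K↓`, and every tube of `J` is some `J↓x`.

Antisymmetry of the tree is where maximality enters: if `J↓x = J↓y = D` with `x ≠ y`, a maximal
tube through `y` inside `D \ {x}` is compatible with all of `J` but is not in `J`.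
-/

theorem SimpleGraph.subset_of_induce_preconnected {V : Type*} {G : SimpleGraph V} {X S : Set V}
    (hX : (G.induce X).Preconnected) {b : V} (hbX : b ∈ X) (hbS : b ∈ S)
    (hS : ∀ c ∈ X ∩ S, ∀ x ∈ X, G.Adj c x → x ∈ S) : X ⊆ S := by
  intro x hxX
  by_contra hxS
  obtain ⟨w⟩ := hX ⟨b, hbX⟩ ⟨x, hxX⟩
  obtain ⟨d, -, hd₁, hd₂⟩ := w.exists_boundary_dart {v | v.1 ∈ S} hbS hxS
  exact hd₂ (hS _ ⟨d.fst.2, hd₁⟩ _ d.snd.2 d.adj)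

section Tubings

variable {n : ℕ} {G : SimpleGraph (Fin n)} {T J K : Finset (Finset (Fin n))}
  {W X Y : Finset (Fin n)} {x y : Fin n}

theorem isTube_singleton (x : Fin n) : IsTube G {x} :=
  ⟨singleton_nonempty x, by
    rw [coe_singleton, SimpleGraph.induce_singleton_eq_top]
    exact SimpleGraph.connected_top⟩

theorem isTube_univ [Nonempty (Fin n)] (hG : G.Preconnected) : IsTube G univ :=
  ⟨univ_nonempty, by rw [coe_univ]; exact ⟨(SimpleGraph.induceUnivIso G).preconnected_iff.2 hG⟩⟩

theorem IsTube.union_of_adj (hX : IsTube G X) (hY : IsTube G Y) (hx : x ∈ X) (hy : y ∈ Y)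
    (hxy : G.Adj x y) : IsTube G (X ∪ Y) :=
  ⟨hX.1.mono subset_union_left, by
    rw [coe_union]
    exact SimpleGraph.connected_induce_union hX.2.preconnected hY.2.preconnected hx hy hxy⟩

theorem IsTube.union_of_mem (hX : IsTube G X) (hY : IsTube G Y) (hxX : x ∈ X) (hxY : x ∈ Y) :
    IsTube G (X ∪ Y) :=
  ⟨hX.1.mono subset_union_left, by
    rw [coe_union]
    exact SimpleGraph.induce_union_connected hX.2.preconnected hY.2.preconnected ⟨x, hxX, hxY⟩⟩

theorem TubeCompatible.symm (h : TubeCompatible G X Y) : TubeCompatible G Y X := by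
  rcases h with h | h | h
  exacts [Or.inr (Or.inl h), Or.inl h, Or.inr (Or.inr (union_comm X Y ▸ h))]

theorem IsTubing.subset_or_subset (hJ : IsTubing G J) (hX : X ∈ J) (hY : Y ∈ J) (hxX : x ∈ X)
    (hxY : x ∈ Y) : X ⊆ Y ∨ Y ⊆ X :=
  (hJ.2 X hX Y hY).imp_right
    (Or.resolve_right · (not_not.2 ((hJ.1 X hX).union_of_mem (hJ.1 Y hY) hxX hxY)))

theorem mem_tubingDown : y ∈ tubingDown T x ↔ ∀ X ∈ T, x ∈ X → y ∈ X := by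
  simp [tubingDown]

theorem self_mem_tubingDown (T : Finset (Finset (Fin n))) (x : Fin n) : x ∈ tubingDown T x :=
  mem_tubingDown.2 fun _ _ h => h

theorem tubingDown_subset (hX : X ∈ T) (hx : x ∈ X) : tubingDown T x ⊆ X :=
  fun _ hy => mem_tubingDown.1 hy X hX hx

theorem tubingDown_subset_tubingDown (h : treeLE T x y) : tubingDown T x ⊆ tubingDown T y :=
  fun _ hz => mem_tubingDown.2 fun X hX hy => mem_tubingDown.1 hz X hX (mem_tubingDown.1 h X hX hy)

theorem IsTubing.tubingDown_mem (hJ : IsTubing G J) (hX : X ∈ J) (hx : x ∈ X) :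
    tubingDown J x ∈ J := by
  classical
  obtain ⟨M, hM⟩ := (J.filter (x ∈ ·)).exists_minimal ⟨X, mem_filter.2 ⟨hX, hx⟩⟩
  obtain ⟨hMJ, hxM⟩ := mem_filter.1 hM.prop
  suffices tubingDown J x = M by rwa [this]
  refine (tubingDown_subset hMJ hxM).antisymm fun y hy => mem_tubingDown.2 fun Z hZ hxZ => ?_
  rcases hJ.subset_or_subset hZ hMJ hxZ hxM with hZM | hMZ
  · exact hM.eq_of_le (mem_filter.2 ⟨hZ, hxZ⟩) hZM ▸ hy
  · exact hMZ hy

theorem IsTubing.exists_tubingDown_eq (hJ : IsTubing G J) (hX : X ∈ J) :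
    ∃ x ∈ X, tubingDown J x = X := by
  classical
  by_contra! hne
  have hbelow : ∀ x ∈ X, ∃ Z ∈ J, x ∈ Z ∧ Z ⊂ X := by
    intro x hx
    obtain ⟨y, hyX, hy⟩ := not_subset.1 fun h => hne x hx ((tubingDown_subset hX hx).antisymm h)
    obtain ⟨Z, hZ, hxZ, hyZ⟩ : ∃ Z ∈ J, x ∈ Z ∧ y ∉ Z := by simpa [mem_tubingDown] using hy
    refine ⟨Z, hZ, hxZ, ?_⟩
    rcases hJ.subset_or_subset hZ hX hxZ hx with h | h
    · exact h.ssubset_of_ne (by rintro rfl; exact hyZ hyX)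
    · exact absurd (h hyX) hyZ
  obtain ⟨x₀, hx₀⟩ := (hJ.1 X hX).1
  obtain ⟨Z₀, hZ₀, -, hZ₀X⟩ := hbelow x₀ hx₀
  -- A maximal tube of `J` strictly inside `X` absorbs every neighbour in `X` of its vertices.
  obtain ⟨M, hM⟩ := (J.filter (· ⊂ X)).exists_maximal ⟨Z₀, mem_filter.2 ⟨hZ₀, hZ₀X⟩⟩
  obtain ⟨hMJ, hMX⟩ := mem_filter.1 hM.prop
  obtain ⟨b, hb⟩ := (hJ.1 M hMJ).1
  refine hMX.not_subset (coe_subset.1 <| SimpleGraph.subset_of_induce_preconnected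
    (hJ.1 X hX).2.preconnected (hMX.subset hb) hb ?_)
  rintro c ⟨-, hcM⟩ v hvX hcv
  obtain ⟨Z, hZ, hvZ, hZX⟩ := hbelow v hvX
  rcases hJ.2 M hMJ Z hZ with hMZ | hZM | hMZ
  · exact hM.eq_of_le (mem_filter.2 ⟨hZ, hZX⟩) hMZ ▸ hvZ
  · exact hZM hvZ
  · exact absurd ((hJ.1 M hMJ).union_of_adj (hJ.1 Z hZ) hcM hvZ hcv) hMZ

theorem IsMaxTubing.mem_of_compatible (hJ : IsMaxTubing G J) (hW : IsTube G W)
    (hcompat : ∀ Z ∈ J, TubeCompatible G W Z) : W ∈ J := by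
  classical
  have hWJ : IsTubing G (insert W J) := by
    refine ⟨forall_mem_insert _ _ _ |>.2 ⟨hW, hJ.1.1⟩, ?_⟩
    simp only [forall_mem_insert]
    exact ⟨⟨Or.inl subset_rfl, hcompat⟩, fun X hX => ⟨(hcompat X hX).symm, hJ.1.2 X hX⟩⟩
  rw [← hJ.2 _ hWJ (subset_insert W J)]
  exact mem_insert_self W J

theorem IsMaxTubing.univ_mem [Nonempty (Fin n)] (hG : G.Preconnected) (hJ : IsMaxTubing G J) :
    univ ∈ J :=
  hJ.mem_of_compatible (isTube_univ hG) fun Z _ => Or.inr (Or.inl (subset_univ Z))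

theorem IsMaxTubing.tubingDown_mem (hG : G.Preconnected) (hJ : IsMaxTubing G J) (x : Fin n) :
    tubingDown J x ∈ J :=
  have : Nonempty (Fin n) := ⟨x⟩
  hJ.1.tubingDown_mem (hJ.univ_mem hG) (mem_univ x)

theorem IsMaxTubing.tubingDown_injective (hG : G.Preconnected) (hJ : IsMaxTubing G J) :
    Function.Injective (tubingDown J) := by
  classical
  intro x y hxy
  by_contra hne
  set D := tubingDown J x
  have hDJ : D ∈ J := hJ.tubingDown_mem hG x
  have hyD : y ∈ D := hxy ▸ self_mem_tubingDown J y
  obtain ⟨W, hW⟩ := ((D.erase x).powerset.filter fun T => y ∈ T ∧ IsTube G T).exists_maximal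
    ⟨{y}, mem_filter.2 ⟨mem_powerset.2 (singleton_subset_iff.2 (mem_erase.2 ⟨Ne.symm hne, hyD⟩)),
      mem_singleton_self y, isTube_singleton y⟩⟩
  obtain ⟨hWD, hyW, hWtube⟩ : W ⊆ D.erase x ∧ y ∈ W ∧ IsTube G W := by
    simpa only [mem_filter, mem_powerset] using hW.prop
  have hWD' : W ⊆ D := hWD.trans (erase_subset x D)
  have hWJ : W ∈ J := by
    refine hJ.mem_of_compatible hWtube fun Z hZ => ?_
    rcases hJ.1.2 D hDJ Z hZ with hDZ | hZD | hDZ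
    · exact Or.inl (hWD'.trans hDZ)
    · by_cases hxZ : x ∈ Z
      · exact Or.inl (hWD'.trans (tubingDown_subset hZ hxZ))
      by_cases hWZ : IsTube G (W ∪ Z)
      · refine Or.inr (Or.inl ?_)
        have hmem : W ∪ Z ∈ (D.erase x).powerset.filter fun T => y ∈ T ∧ IsTube G T :=
          mem_filter.2 ⟨mem_powerset.2 (union_subset hWD (subset_erase.2 ⟨hZD, hxZ⟩)),
            mem_union_left Z hyW, hWZ⟩
        exact hW.eq_of_le hmem subset_union_left ▸ subset_union_right
      · exact Or.inr (Or.inr hWZ)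
    · refine Or.inr (Or.inr fun hWZ => hDZ ?_)
      have := (hJ.1.1 D hDJ).union_of_mem hWZ hyD (mem_union_left Z hyW)
      rwa [← union_assoc, union_eq_left.2 hWD'] at this
  have hxW : x ∈ W := tubingDown_subset hWJ hyW (hxy ▸ self_mem_tubingDown J x)
  exact (mem_erase.1 (hWD hxW)).1 rfl

theorem IsMaxTubing.treeLE_antisymm (hG : G.Preconnected) (hJ : IsMaxTubing G J)
    (hxy : treeLE J x y) (hyx : treeLE J y x) : x = y :=
  hJ.tubingDown_injective hG
    ((tubingDown_subset_tubingDown hxy).antisymm (tubingDown_subset_tubingDown hyx))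

theorem treeLE_iff_of_invSet_eq (h : invSet J = invSet K) (hxy : x < y) :
    treeLE J y x ↔ treeLE K y x := by
  have := Set.ext_iff.1 h (x, y)
  simp only [invSet, Set.mem_ofPred_eq] at this
  exact and_congr_right_iff.1 this hxy

theorem IsMaxTubing.mem_tubingDown_of_adj (hG : G.Preconnected) (hJ : IsMaxTubing G J)
    (hK : IsMaxTubing G K) (h : invSet J = invSet K) {b c : Fin n} (hxJ : x ∈ tubingDown J b)
    (hcK : c ∈ tubingDown K b) (hcx : G.Adj c x) : x ∈ tubingDown K b := by
  by_contra hxK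
  rcases lt_trichotomy x b with hlt | rfl | hgt
  · have hKx := hK.tubingDown_mem hG x
    have hKb := hK.tubingDown_mem hG b
    rcases hK.1.2 _ hKx _ hKb with hsub | hsub | hnot
    · exact hxK (hsub (self_mem_tubingDown K x))
    · have hbx : treeLE J b x := (treeLE_iff_of_invSet_eq h hlt).2 (hsub (self_mem_tubingDown K b))
      exact hlt.ne (hJ.treeLE_antisymm hG hxJ hbx)
    · exact hnot ((hK.1.1 _ hKx).union_of_adj (hK.1.1 _ hKb) (self_mem_tubingDown K x) hcK hcx.symm)
  · exact hxK (self_mem_tubingDown K x)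
  · exact hxK ((treeLE_iff_of_invSet_eq h hgt).1 hxJ)

theorem IsMaxTubing.tubingDown_subset_of_invSet_eq (hG : G.Preconnected) (hJ : IsMaxTubing G J)
    (hK : IsMaxTubing G K) (h : invSet J = invSet K) (b : Fin n) :
    tubingDown J b ⊆ tubingDown K b :=
  coe_subset.1 <| SimpleGraph.subset_of_induce_preconnected
    (hJ.1.1 _ (hJ.tubingDown_mem hG b)).2.preconnected (self_mem_tubingDown J b)
    (self_mem_tubingDown K b) fun _ hc _ hx hcx => hJ.mem_tubingDown_of_adj hG hK h hx hc.2 hcx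

theorem IsMaxTubing.eq_of_invSet_eq (hG : G.Preconnected) (hJ : IsMaxTubing G J)
    (hK : IsMaxTubing G K) (h : invSet J = invSet K) : J = K := by
  have hdown : tubingDown J = tubingDown K := funext fun b =>
    (hJ.tubingDown_subset_of_invSet_eq hG hK h b).antisymm
      (hK.tubingDown_subset_of_invSet_eq hG hJ h.symm b)
  refine (hJ.2 K hK.1 fun X hX => ?_).symm
  obtain ⟨x, -, rfl⟩ := hJ.1.exists_tubingDown_eq hX
  exact hdown ▸ hK.tubingDown_mem hG x

end Tubings

theorem cycleGraph_preconnected (n : ℕ) : (cycleGraph n).Preconnected :=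
  (SimpleGraph.pathGraph_preconnected n).mono fun u v huv => by
    rw [SimpleGraph.pathGraph_adj] at huv
    simp only [cycleGraph, SimpleGraph.fromRel_adj, ne_eq, Fin.ext_iff]
    omega

/-- Maximal tubings of the cycle graph are equal iff their inversion sets coincide. -/
theorem mtub_cycle_inv_eq (n : ℕ) (J K : Finset (Finset (Fin n)))
    (hJ : IsMaxTubing (cycleGraph n) J) (hK : IsMaxTubing (cycleGraph n) K) :
    invSet J = invSet K ↔ J = K :=
  ⟨hJ.eq_of_invSet_eq (cycleGraph_preconnected n) hK, fun h => h ▸ rfl⟩
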